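/- Suppose H₁ : [0,T] → Mat_n(ℂ) is continuous Hermitian-valued and satisfies ‖H₁(t) - Λ(t)H‖_F ≤ ε for all t, where H is a fixed Hermitian matrix with ‖H‖_F = 1 and Λ : [0,T] → ℝ₊ is continuous. Let U solve U' = -iH₁U, U(0)=𝟙. Then ∫₀ᵗ Λ(s) ds - d_F(U(t), 𝟙) ≤ d_F(U(t), exp(-i ∫₀ᵗ Λ(s)ds · H)) + (∫₀ᵗ Λ(s) ds - d_F(exp(-i∫₀ᵗΛ(s)ds·H), 𝟙)) ≤ ε t + (∫₀ᵗ Λ(s)ds - d_F(exp(-i∫₀ᵗΛ(s)ds·H), 𝟙)). -/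

import Mathlib

/-!
Put `E := exp (-i (∫₀ᵗ Λ) H)`. The first inequality is the triangle inequality
`d_F(E, 𝟙) ≤ d_F(U t, E) + d_F(U t, 𝟙)`. For the second, pass to the interaction picture
`W s = exp (i (∫₀ˢ Λ) H) U s`: its derivative is `-i (H₁ - Λ H)` conjugated by unitaries, whose
Frobenius norm is at most `ε`, so `s ↦ E W s` is a unitary path from `E` to `U t` of length at
most `ε t`.

Admissible paths for `d_F` must be differentiable on all of `ℝ` with continuous derivative.
Running a path along `Real.smoothTransition`, which is flat outside `[0, 1]`, makes every `C¹`
path on an interval admissible without changing its length; it also makes two paths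
concatenable, which gives the triangle inequality for `d_F`.
-/

open Matrix MeasureTheory Set

attribute [local instance] Matrix.frobeniusNormedAddCommGroup Matrix.frobeniusNormedSpace
  Matrix.frobeniusNormedRing Matrix.frobeniusNormedAlgebra

noncomputable def frob {n : ℕ} (A : Matrix (Fin n) (Fin n) ℂ) : ℝ :=
  Real.sqrt (∑ i, ∑ j, ‖A i j‖ ^ 2)

open Real

section Frobenius

variable {m k : Type*} [Fintype m] [Fintype k]

theorem frob_eq_norm {n : ℕ} (A : Matrix (Fin n) (Fin n) ℂ) : frob A = ‖A‖ := by
  simp only [frob, frobenius_norm_def, Real.sqrt_eq_rpow, Real.rpow_two]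

theorem frobenius_norm_sq_eq_re_trace (A : Matrix m k ℂ) : ‖A‖ ^ 2 = (Aᴴ * A).trace.re := by
  rw [frobenius_norm_def, ← Real.rpow_natCast, ← Real.rpow_mul (by positivity), Finset.sum_comm]
  simp [trace, mul_apply, Complex.re_sum, Complex.conj_mul', ← Complex.ofReal_pow]

variable [DecidableEq m]

theorem frobenius_norm_unitary_mul {V : Matrix m m ℂ} (hV : V ∈ unitaryGroup m ℂ)
    (A : Matrix m k ℂ) : ‖V * A‖ = ‖A‖ := by
  have hVV : Vᴴ * V = 1 := Matrix.mem_unitaryGroup_iff'.mp hV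
  rw [← sq_eq_sq₀ (norm_nonneg _) (norm_nonneg _), frobenius_norm_sq_eq_re_trace,
    frobenius_norm_sq_eq_re_trace, conjTranspose_mul, Matrix.mul_assoc,
    ← Matrix.mul_assoc Vᴴ, hVV, Matrix.one_mul]

theorem frobenius_norm_mul_unitary {V : Matrix m m ℂ} (hV : V ∈ unitaryGroup m ℂ)
    (A : Matrix k m ℂ) : ‖A * V‖ = ‖A‖ := by
  rw [← frobenius_norm_conjTranspose, conjTranspose_mul]
  exact (frobenius_norm_unitary_mul (Unitary.star_mem hV) _).trans (frobenius_norm_conjTranspose A)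

end Frobenius

namespace Real.smoothTransition

theorem hasDerivAt_deriv (x : ℝ) : HasDerivAt smoothTransition (deriv smoothTransition x) x :=
  (smoothTransition.contDiff (n := 1).differentiable one_ne_zero x).hasDerivAt

theorem continuous_deriv : Continuous (deriv smoothTransition) :=
  (smoothTransition.contDiff (n := 1)).continuous_deriv le_rfl

theorem deriv_nonneg (x : ℝ) : 0 ≤ deriv smoothTransition x :=
  smoothTransition.monotone.deriv_nonneg

theorem deriv_of_nonpos {x : ℝ} (hx : x ≤ 0) : deriv smoothTransition x = 0 :=
  IsLocalMin.deriv_eq_zero <| Filter.Eventually.of_forall fun y => by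
    rw [zero_of_nonpos hx]; exact nonneg y

theorem deriv_of_one_le {x : ℝ} (hx : 1 ≤ x) : deriv smoothTransition x = 0 :=
  IsLocalMax.deriv_eq_zero <| Filter.Eventually.of_forall fun y => by
    rw [one_of_one_le hx]; exact le_one y

theorem integral_norm_smul_comp {E : Type*} [NormedAddCommGroup E] [NormedSpace ℝ E]
    {a b : ℝ} (hab : a ≤ b) {F : ℝ → E} (hF : ContinuousOn F (Icc a b)) :
    ∫ s in (0:ℝ)..1,
        ‖((b - a) * deriv smoothTransition s) • F (a + (b - a) * smoothTransition s)‖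
      = ∫ x in a..b, ‖F x‖ := by
  set φ : ℝ → ℝ := fun s => a + (b - a) * smoothTransition s
  set φ' : ℝ → ℝ := fun s => (b - a) * deriv smoothTransition s
  have hφ : ∀ s, HasDerivAt φ (φ' s) s :=
    fun s => ((hasDerivAt_deriv s).const_mul (b - a)).const_add a
  have hmaps : φ '' uIcc 0 1 ⊆ Icc a b := by
    rintro _ ⟨s, -, rfl⟩
    constructor <;> nlinarith [nonneg s, le_one s]
  have hnorm : ∀ s, ‖φ' s • F (φ s)‖ = ‖F (φ s)‖ * φ' s := fun s => by
    rw [norm_smul, Real.norm_of_nonneg (mul_nonneg (sub_nonneg.2 hab) (deriv_nonneg s)), mul_comm]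
  have h := intervalIntegral.integral_comp_mul_deriv''
    (fun s _ => (hφ s).continuousAt.continuousWithinAt) (fun s _ => (hφ s).hasDerivWithinAt)
    (continuous_deriv.const_mul _).continuousOn (hF.norm.mono hmaps)
  rw [show φ 0 = a by simp [φ, smoothTransition.zero],
    show φ 1 = b by simp [φ, smoothTransition.one]] at h
  change ∫ s in (0:ℝ)..1, ‖φ' s • F (φ s)‖ = _
  simp_rw [hnorm]
  exact h

theorem integral_norm_deriv_smul_comp {E : Type*} [NormedAddCommGroup E] [NormedSpace ℝ E]
    {F : ℝ → E} (hF : ContinuousOn F (Icc 0 1)) :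
    ∫ s in (0:ℝ)..1, ‖deriv smoothTransition s • F (smoothTransition s)‖
      = ∫ s in (0:ℝ)..1, ‖F s‖ := by
  simpa only [sub_zero, one_mul, zero_add] using integral_norm_smul_comp zero_le_one hF

theorem integral_norm_deriv_smul_comp_add {E : Type*} [NormedAddCommGroup E] [NormedSpace ℝ E]
    {F₁ F₂ : ℝ → E} (hF₁ : Continuous F₁) (hF₂ : Continuous F₂) :
    ∫ x in (0:ℝ)..2, ‖deriv smoothTransition x • F₁ (smoothTransition x) +
        deriv smoothTransition (x - 1) • F₂ (smoothTransition (x - 1))‖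
      = (∫ s in (0:ℝ)..1, ‖F₁ s‖) + ∫ s in (0:ℝ)..1, ‖F₂ s‖ := by
  have hc : Continuous fun x => ‖deriv smoothTransition x • F₁ (smoothTransition x) +
      deriv smoothTransition (x - 1) • F₂ (smoothTransition (x - 1))‖ := by
    have := continuous_deriv
    fun_prop
  have hshift :
      ∫ x in (1:ℝ)..2, ‖deriv smoothTransition (x - 1) • F₂ (smoothTransition (x - 1))‖
        = ∫ s in (0:ℝ)..1, ‖deriv smoothTransition s • F₂ (smoothTransition s)‖ := by
    rw [intervalIntegral.integral_comp_sub_right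
      (fun s => ‖deriv smoothTransition s • F₂ (smoothTransition s)‖)]
    norm_num
  rw [← intervalIntegral.integral_add_adjacent_intervals (hc.intervalIntegrable 0 1)
    (hc.intervalIntegrable 1 2), ← integral_norm_deriv_smul_comp hF₁.continuousOn,
    ← integral_norm_deriv_smul_comp hF₂.continuousOn, ← hshift]
  congr 1 <;> refine intervalIntegral.integral_congr fun x hx => ?_
  · rw [uIcc_of_le zero_le_one] at hx
    simp [deriv_of_nonpos (sub_nonpos.2 hx.2)]
  · rw [uIcc_of_le one_le_two] at hx
    simp [deriv_of_one_le hx.1]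

end Real.smoothTransition

/-- Riemannian distance on the unitary group induced by the Frobenius (Killing) metric. -/
noncomputable def dF {n : ℕ} (U V : Matrix (Fin n) (Fin n) ℂ) : ℝ :=
  sInf { l : ℝ | ∃ γ : ℝ → Matrix (Fin n) (Fin n) ℂ,
    γ 0 = U ∧ γ 1 = V ∧ (∀ t, γ t ∈ Matrix.unitaryGroup (Fin n) ℂ) ∧
    (∀ t, DifferentiableAt ℝ γ t) ∧ Continuous (deriv γ) ∧
    l = ∫ s in (0:ℝ)..(1:ℝ), frob (deriv γ s) }

section UnitaryPaths

variable {n : ℕ}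

def unitaryPathLengths (A B : Matrix (Fin n) (Fin n) ℂ) : Set ℝ :=
  { l | ∃ γ : ℝ → Matrix (Fin n) (Fin n) ℂ,
    γ 0 = A ∧ γ 1 = B ∧ (∀ t, γ t ∈ unitaryGroup (Fin n) ℂ) ∧
    (∀ t, DifferentiableAt ℝ γ t) ∧ Continuous (deriv γ) ∧
    l = ∫ s in (0:ℝ)..1, ‖deriv γ s‖ }

theorem dF_eq_sInf_unitaryPathLengths (A B : Matrix (Fin n) (Fin n) ℂ) :
    dF A B = sInf (unitaryPathLengths A B) := by
  simp only [dF, unitaryPathLengths, frob_eq_norm]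

theorem integral_norm_mem_unitaryPathLengths {a b : ℝ} (hab : a ≤ b)
    {W W' : ℝ → Matrix (Fin n) (Fin n) ℂ} (hW : ∀ x ∈ Icc a b, HasDerivAt W (W' x) x)
    (hW' : ContinuousOn W' (Icc a b)) (hWu : ∀ x ∈ Icc a b, W x ∈ unitaryGroup (Fin n) ℂ) :
    (∫ x in a..b, ‖W' x‖) ∈ unitaryPathLengths (W a) (W b) := by
  set φ : ℝ → ℝ := fun s => a + (b - a) * smoothTransition s
  set φ' : ℝ → ℝ := fun s => (b - a) * deriv smoothTransition s
  have hφ : ∀ s, HasDerivAt φ (φ' s) s :=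
    fun s => ((smoothTransition.hasDerivAt_deriv s).const_mul (b - a)).const_add a
  have hφmem : ∀ s, φ s ∈ Icc a b := fun s => by
    constructor <;> nlinarith [smoothTransition.nonneg s, smoothTransition.le_one s]
  have hγ : ∀ s, HasDerivAt (W ∘ φ) (φ' s • W' (φ s)) s :=
    fun s => (hW _ (hφmem s)).scomp s (hφ s)
  have hderiv : deriv (W ∘ φ) = fun s => φ' s • W' (φ s) := funext fun s => (hγ s).deriv
  refine ⟨W ∘ φ, by simp [φ, smoothTransition.zero], by simp [φ, smoothTransition.one],
    fun s => hWu _ (hφmem s), fun s => (hγ s).differentiableAt, ?_, ?_⟩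
  · rw [hderiv]
    exact (smoothTransition.continuous_deriv.const_mul _).smul
      (hW'.comp_continuous (continuous_const.add (continuous_const.mul smoothTransition.continuous))
        hφmem)
  · rw [hderiv, smoothTransition.integral_norm_smul_comp hab hW']

theorem unitaryPathLengths_nonneg {A B : Matrix (Fin n) (Fin n) ℂ} {l : ℝ}
    (hl : l ∈ unitaryPathLengths A B) : 0 ≤ l := by
  obtain ⟨γ, -, -, -, -, -, rfl⟩ := hl
  exact intervalIntegral.integral_nonneg zero_le_one fun _ _ => norm_nonneg _

theorem bddBelow_unitaryPathLengths (A B : Matrix (Fin n) (Fin n) ℂ) :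
    BddBelow (unitaryPathLengths A B) :=
  ⟨0, fun _ => unitaryPathLengths_nonneg⟩

theorem dF_le_of_mem_unitaryPathLengths {A B : Matrix (Fin n) (Fin n) ℂ} {l : ℝ}
    (hl : l ∈ unitaryPathLengths A B) : dF A B ≤ l := by
  rw [dF_eq_sInf_unitaryPathLengths]
  exact csInf_le (bddBelow_unitaryPathLengths A B) hl

theorem mem_unitaryPathLengths_symm {A B : Matrix (Fin n) (Fin n) ℂ} {l : ℝ}
    (hl : l ∈ unitaryPathLengths A B) : l ∈ unitaryPathLengths B A := by
  obtain ⟨γ, hγ0, hγ1, hγu, hγd, hγc, rfl⟩ := hl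
  have hderiv : deriv (fun s => γ (1 - s)) = fun s => -deriv γ (1 - s) :=
    funext fun s => deriv_comp_const_sub γ 1 s
  refine ⟨fun s => γ (1 - s), by simpa using hγ1, by simpa using hγ0, fun s => hγu _,
    fun s => differentiableAt_comp_const_sub.2 (hγd _), ?_, ?_⟩
  · rw [hderiv]
    exact (hγc.comp (continuous_const.sub continuous_id)).neg
  · rw [hderiv]
    simp [intervalIntegral.integral_comp_sub_left (fun s => ‖deriv γ s‖)]

theorem unitaryPathLengths_comm (A B : Matrix (Fin n) (Fin n) ℂ) :
    unitaryPathLengths A B = unitaryPathLengths B A :=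
  Set.ext fun _ => ⟨mem_unitaryPathLengths_symm, mem_unitaryPathLengths_symm⟩

theorem dF_comm (A B : Matrix (Fin n) (Fin n) ℂ) : dF A B = dF B A := by
  simp only [dF_eq_sInf_unitaryPathLengths, unitaryPathLengths_comm A B]

theorem add_mem_unitaryPathLengths {A B C : Matrix (Fin n) (Fin n) ℂ} {l₁ l₂ : ℝ}
    (h₁ : l₁ ∈ unitaryPathLengths A B) (h₂ : l₂ ∈ unitaryPathLengths B C) :
    l₁ + l₂ ∈ unitaryPathLengths A C := by
  obtain ⟨γ₁, hγ₁0, hγ₁1, hγ₁u, hγ₁d, hγ₁c, rfl⟩ := h₁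
  obtain ⟨γ₂, hγ₂0, hγ₂1, hγ₂u, hγ₂d, hγ₂c, rfl⟩ := h₂
  -- `smoothTransition` is constant outside `[0, 1]`, so only `γ₁` moves on `[0, 1]` and only
  -- `γ₂` on `[1, 2]`: `W` is `γ₁` followed by `γ₂`, without a case split.
  set W : ℝ → Matrix (Fin n) (Fin n) ℂ :=
    fun x => γ₁ (smoothTransition x) + γ₂ (smoothTransition (x - 1)) - B
  set W' : ℝ → Matrix (Fin n) (Fin n) ℂ := fun x =>
    deriv smoothTransition x • deriv γ₁ (smoothTransition x) +
      deriv smoothTransition (x - 1) • deriv γ₂ (smoothTransition (x - 1))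
  have hW : ∀ x, HasDerivAt W (W' x) x := fun x =>
    (((hγ₁d _).hasDerivAt.scomp x (smoothTransition.hasDerivAt_deriv x)).add
      ((hγ₂d _).hasDerivAt.scomp x
        ((smoothTransition.hasDerivAt_deriv (x - 1)).comp_sub_const x 1))).sub_const B
  have hW_le : ∀ x ≤ 1, W x = γ₁ (smoothTransition x) := fun x hx => by
    simp [W, smoothTransition.zero_of_nonpos (sub_nonpos.2 hx), hγ₂0]
  have hW_ge : ∀ x, 1 ≤ x → W x = γ₂ (smoothTransition (x - 1)) := fun x hx => by
    simp [W, smoothTransition.one_of_one_le hx, hγ₁1]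
  have hW'c : Continuous W' := by
    have hσ := smoothTransition.continuous_deriv
    have hσ₁ := smoothTransition.continuous_deriv.comp (continuous_sub_right 1)
    exact (hσ.smul (hγ₁c.comp smoothTransition.continuous)).add
      (hσ₁.smul (hγ₂c.comp (smoothTransition.continuous.comp (continuous_sub_right 1))))
  have hWu : ∀ x, W x ∈ unitaryGroup (Fin n) ℂ := fun x => by
    rcases le_total x 1 with hx | hx
    · rw [hW_le x hx]; exact hγ₁u _
    · rw [hW_ge x hx]; exact hγ₂u _
  have hW0 : W 0 = A := by rw [hW_le 0 zero_le_one, smoothTransition.zero, hγ₁0]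
  have hW2 : W 2 = C := by norm_num [hW_ge 2 one_le_two, smoothTransition.one, hγ₂1]
  have hmem := integral_norm_mem_unitaryPathLengths zero_le_two (fun x _ => hW x)
    hW'c.continuousOn (fun x _ => hWu x)
  rwa [hW0, hW2, smoothTransition.integral_norm_deriv_smul_comp_add hγ₁c hγ₂c] at hmem

theorem dF_le_add {A B C : Matrix (Fin n) (Fin n) ℂ} (hAB : (unitaryPathLengths A B).Nonempty)
    (hBC : (unitaryPathLengths B C).Nonempty) : dF A C ≤ dF A B + dF B C := by
  simp only [dF_eq_sInf_unitaryPathLengths]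
  rw [← sub_le_iff_le_add]
  refine le_csInf hAB fun l₁ h₁ => ?_
  rw [sub_le_comm]
  refine le_csInf hBC fun l₂ h₂ => ?_
  rw [sub_le_iff_le_add']
  exact csInf_le (bddBelow_unitaryPathLengths A C) (add_mem_unitaryPathLengths h₁ h₂)

theorem exists_mem_unitaryPathLengths_le {a b C : ℝ} (hab : a ≤ b)
    {W W' : ℝ → Matrix (Fin n) (Fin n) ℂ} (hW : ∀ x ∈ Icc a b, HasDerivAt W (W' x) x)
    (hW' : ContinuousOn W' (Icc a b)) (hWu : ∀ x ∈ Icc a b, W x ∈ unitaryGroup (Fin n) ℂ)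
    (hbound : ∀ x ∈ Icc a b, ‖W' x‖ ≤ C) :
    ∃ l ∈ unitaryPathLengths (W a) (W b), l ≤ C * (b - a) := by
  refine ⟨_, integral_norm_mem_unitaryPathLengths hab hW hW' hWu, ?_⟩
  simpa [mul_comm] using intervalIntegral.integral_mono_on hab
    (hW'.norm.intervalIntegrable_of_Icc hab) (intervalIntegrable_const (μ := volume)) hbound

end UnitaryPaths

section Unitarity

variable {m : Type*} [Fintype m] [DecidableEq m]

theorem mem_unitaryGroup_of_hasDerivAt {a b : ℝ} {U G : ℝ → Matrix m m ℂ}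
    (hG : ∀ t ∈ Icc a b, G t ∈ skewAdjoint (Matrix m m ℂ))
    (hU : ∀ t ∈ Icc a b, HasDerivAt U (G t * U t) t)
    (ha : U a ∈ unitaryGroup m ℂ) : ∀ t ∈ Icc a b, U t ∈ unitaryGroup m ℂ := by
  have hUc : ContinuousOn U (Icc a b) := HasDerivAt.continuousOn hU
  have hderiv : ∀ t ∈ Ico a b,
      HasDerivWithinAt (fun s => star (U s) * U s) 0 (Ici t) t := fun t ht => by
    have ht' := Ico_subset_Icc_self ht
    have hzero : star (G t * U t) * U t + star (U t) * (G t * U t) = 0 := by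
      rw [star_mul, skewAdjoint.mem_iff.mp (hG t ht'), Matrix.mul_neg, neg_mul, Matrix.mul_assoc,
        neg_add_cancel]
    have h := (hU t ht').star.mul (hU t ht')
    rw [hzero] at h
    exact h.hasDerivWithinAt
  intro t ht
  rw [Matrix.mem_unitaryGroup_iff', ← Matrix.mem_unitaryGroup_iff'.mp ha]
  exact constant_of_has_deriv_right_zero (hUc.star.mul hUc) hderiv t ht

end Unitarity

theorem ContinuousOn.exists_continuous_eqOn_Icc {β : Type*} [TopologicalSpace β] {a b : ℝ}
    (hab : a ≤ b) {f : ℝ → β} (hf : ContinuousOn f (Icc a b)) :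
    ∃ g : ℝ → β, Continuous g ∧ EqOn g f (Icc a b) :=
  ⟨fun x => f (projIcc a b hab x),
    hf.comp_continuous (by fun_prop) fun x => (projIcc a b hab x).2,
    fun x hx => by simp [projIcc_of_mem hab hx]⟩

section InteractionPicture

variable {n : ℕ}

theorem hasDerivAt_interactionPicture {H H₁ : Matrix (Fin n) (Fin n) ℂ} {θ : ℝ → ℝ}
    {c x : ℝ} {U : ℝ → Matrix (Fin n) (Fin n) ℂ} (hθ : HasDerivAt θ c x)
    (hU : HasDerivAt U ((-Complex.I) • (H₁ * U x)) x) :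
    HasDerivAt (fun y => NormedSpace.exp (θ y • (Complex.I • H)) * U y)
      (NormedSpace.exp (θ x • (Complex.I • H)) * ((-Complex.I) • (H₁ - c • H) * U x))
      x := by
  have hM : HasDerivAt (fun y => NormedSpace.exp (θ y • (Complex.I • H)))
      (c • (NormedSpace.exp (θ x • (Complex.I • H)) * (Complex.I • H))) x :=
    (hasDerivAt_exp_smul_const (Complex.I • H) (θ x)).scomp x hθ
  have h := hM.mul hU
  have halg : c • (NormedSpace.exp (θ x • (Complex.I • H)) * (Complex.I • H)) * U x +
      NormedSpace.exp (θ x • (Complex.I • H)) * ((-Complex.I) • (H₁ * U x)) =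
      NormedSpace.exp (θ x • (Complex.I • H)) * ((-Complex.I) • (H₁ - c • H) * U x) := by
    simp only [← Complex.coe_smul, smul_sub, sub_mul, mul_sub, smul_mul_assoc, mul_smul_comm,
      Matrix.mul_assoc, smul_smul]
    module
  rwa [halg] at h

theorem exists_mem_unitaryPathLengths_exp_le {t ε : ℝ} (ht : 0 ≤ t)
    {H : Matrix (Fin n) (Fin n) ℂ} (hH : H.IsHermitian) {Λ : ℝ → ℝ}
    (hΛ : ContinuousOn Λ (Icc 0 t)) {H₁ U : ℝ → Matrix (Fin n) (Fin n) ℂ}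
    (hH₁ : ContinuousOn H₁ (Icc 0 t))
    (hclose : ∀ s ∈ Icc 0 t, ‖H₁ s - Λ s • H‖ ≤ ε)
    (hU : ∀ s ∈ Icc 0 t, HasDerivAt U ((-Complex.I) • (H₁ s * U s)) s) (hU0 : U 0 = 1)
    (hUu : ∀ s ∈ Icc 0 t, U s ∈ unitaryGroup (Fin n) ℂ) :
    ∃ l ∈ unitaryPathLengths
      (NormedSpace.exp (((∫ s in (0:ℝ)..t, Λ s : ℝ) : ℂ) • ((-Complex.I) • H))) (U t),
      l ≤ ε * t := by
  obtain ⟨Λ', hΛ'c, hΛ'⟩ := hΛ.exists_continuous_eqOn_Icc ht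
  set θ : ℝ → ℝ := fun x => ∫ u in (0:ℝ)..x, Λ' u
  have hθ : ∀ x, HasDerivAt θ (Λ' x) x :=
    fun x => (hΛ'c.integral_hasStrictDerivAt 0 x).hasDerivAt
  have hθt : θ t = ∫ s in (0:ℝ)..t, Λ s := intervalIntegral.integral_congr fun x hx =>
    hΛ' (by rwa [uIcc_of_le ht] at hx)
  set K : Matrix (Fin n) (Fin n) ℂ := Complex.I • H
  have hK : K ∈ skewAdjoint (Matrix (Fin n) (Fin n) ℂ) :=
    hH.isSelfAdjoint.smul_mem_skewAdjoint Complex.conj_I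
  set M : ℝ → Matrix (Fin n) (Fin n) ℂ := fun x => NormedSpace.exp (θ x • K)
  set E : Matrix (Fin n) (Fin n) ℂ := NormedSpace.exp (-(θ t • K))
  have hE :
      NormedSpace.exp (((∫ s in (0:ℝ)..t, Λ s : ℝ) : ℂ) • ((-Complex.I) • H)) = E := by
    rw [← hθt, Complex.coe_smul, neg_smul, smul_neg]
  have hMu : ∀ x, M x ∈ unitaryGroup (Fin n) ℂ := fun x =>
    NormedSpace.exp_mem_unitary_of_mem_skewAdjoint (skewAdjoint.smul_mem _ hK)
  have hEu : E ∈ unitaryGroup (Fin n) ℂ :=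
    NormedSpace.exp_mem_unitary_of_mem_skewAdjoint (neg_mem (skewAdjoint.smul_mem _ hK))
  set V' : ℝ → Matrix (Fin n) (Fin n) ℂ :=
    fun x => E * (M x * ((-Complex.I) • (H₁ x - Λ' x • H) * U x))
  have hV : ∀ x ∈ Icc 0 t, HasDerivAt (fun y => E * (M y * U y)) (V' x) x := fun x hx =>
    (hasDerivAt_interactionPicture (hθ x) (hU x hx)).const_mul E
  have hV'c : ContinuousOn V' (Icc 0 t) := by
    have hMc : Continuous M := by fun_prop
    have hUc : ContinuousOn U (Icc 0 t) := HasDerivAt.continuousOn hU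
    fun_prop
  have hbound : ∀ x ∈ Icc 0 t, ‖V' x‖ ≤ ε := fun x hx => by
    rw [frobenius_norm_unitary_mul hEu, frobenius_norm_unitary_mul (hMu x),
      frobenius_norm_mul_unitary (hUu x hx), norm_smul, norm_neg, Complex.norm_I, one_mul,
      hΛ' hx]
    exact hclose x hx
  have hM0 : M 0 = 1 := by simp [M, θ]
  have hEM : E * M t = 1 := by
    rw [show E * M t = NormedSpace.exp (-(θ t • K)) * NormedSpace.exp (θ t • K) from rfl,
      ← Matrix.exp_add_of_commute _ _ (Commute.refl (θ t • K)).neg_left, neg_add_cancel,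
      NormedSpace.exp_zero]
  obtain ⟨l, hl, hle⟩ := exists_mem_unitaryPathLengths_le ht hV hV'c
    (fun x hx => mul_mem hEu (mul_mem (hMu x) (hUu x hx))) hbound
  rw [hM0, hU0, Matrix.mul_one, Matrix.mul_one, ← Matrix.mul_assoc, hEM, Matrix.one_mul] at hl
  exact ⟨l, hE ▸ hl, by simpa using hle⟩

end InteractionPicture

theorem tightness_core_general {n : ℕ} (T ε : ℝ)
    (H : Matrix (Fin n) (Fin n) ℂ) (hH : H.IsHermitian)
    (Λ : ℝ → ℝ) (hΛc : ContinuousOn Λ (Set.Icc 0 T))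
    (H₁ U : ℝ → Matrix (Fin n) (Fin n) ℂ)
    (hH₁c : ContinuousOn H₁ (Set.Icc 0 T))
    (hH₁h : ∀ t ∈ Set.Icc (0:ℝ) T, (H₁ t).IsHermitian)
    (hclose : ∀ t ∈ Set.Icc (0:ℝ) T, frob (H₁ t - Λ t • H) ≤ ε)
    (hU : ∀ t ∈ Set.Icc (0:ℝ) T, HasDerivAt U ((-Complex.I) • (H₁ t * U t)) t)
    (hU0 : U 0 = 1) :
    ∀ t ∈ Set.Icc (0:ℝ) T,
      (∫ s in (0:ℝ)..t, Λ s) - dF (U t) 1 ≤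
        dF (U t) (NormedSpace.exp (((∫ s in (0:ℝ)..t, Λ s : ℝ) : ℂ) • ((-Complex.I) • H)))
          + ((∫ s in (0:ℝ)..t, Λ s)
            - dF (NormedSpace.exp (((∫ s in (0:ℝ)..t, Λ s : ℝ) : ℂ) • ((-Complex.I) • H))) 1) ∧
      dF (U t) (NormedSpace.exp (((∫ s in (0:ℝ)..t, Λ s : ℝ) : ℂ) • ((-Complex.I) • H)))
          + ((∫ s in (0:ℝ)..t, Λ s)
            - dF (NormedSpace.exp (((∫ s in (0:ℝ)..t, Λ s : ℝ) : ℂ) • ((-Complex.I) • H))) 1)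
        ≤ ε * t + ((∫ s in (0:ℝ)..t, Λ s)
            - dF (NormedSpace.exp (((∫ s in (0:ℝ)..t, Λ s : ℝ) : ℂ) • ((-Complex.I) • H))) 1) := by
  rintro t ⟨ht, htT⟩
  have hsub : Icc 0 t ⊆ Icc 0 T := Icc_subset_Icc_right htT
  have hUt : ∀ s ∈ Icc 0 t, HasDerivAt U ((-Complex.I) • (H₁ s * U s)) s :=
    fun s hs => hU s (hsub hs)
  have hUu : ∀ s ∈ Icc 0 t, U s ∈ unitaryGroup (Fin n) ℂ :=
    mem_unitaryGroup_of_hasDerivAt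
      (fun s hs => (hH₁h s (hsub hs)).isSelfAdjoint.smul_mem_skewAdjoint (neg_mem Complex.conj_I))
      (fun s hs => by simpa only [smul_mul_assoc] using hUt s hs) (hU0 ▸ one_mem _)
  obtain ⟨l, hl, hle⟩ := exists_mem_unitaryPathLengths_exp_le ht hH (hΛc.mono hsub)
    (hH₁c.mono hsub) (fun s hs => frob_eq_norm (H₁ s - Λ s • H) ▸ hclose s (hsub hs))
    hUt hU0 hUu
  have hU' : ContinuousOn (fun s => (-Complex.I) • (H₁ s * U s)) (Icc 0 t) := by
    have hH₁c' := hH₁c.mono hsub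
    have hUc : ContinuousOn U (Icc 0 t) := HasDerivAt.continuousOn hUt
    fun_prop
  have hUpath := integral_norm_mem_unitaryPathLengths ht hUt hU' hUu
  rw [hU0] at hUpath
  have htri := dF_le_add ⟨l, hl⟩ ⟨_, mem_unitaryPathLengths_symm hUpath⟩
  have hdist := (dF_le_of_mem_unitaryPathLengths hl).trans hle
  rw [dF_comm (NormedSpace.exp _) (U t)] at htri hdist
  exact ⟨by linarith, by linarith⟩

/-- Deterministic core of the tightness theorem: the shortfall of `d_F(U(t),𝟙)` from
`∫₀ᵗ Λ` is controlled via the geodesic `exp(-i∫₀ᵗΛ ds · H)` and the perturbation bound. -/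
theorem tightness_core {n : ℕ} (T ε : ℝ) (hT : 0 ≤ T) (hε : 0 ≤ ε)
    (H : Matrix (Fin n) (Fin n) ℂ) (hH : H.IsHermitian) (hHnorm : frob H = 1)
    (Λ : ℝ → ℝ) (hΛc : ContinuousOn Λ (Set.Icc 0 T))
    (hΛpos : ∀ t ∈ Set.Icc (0:ℝ) T, 0 ≤ Λ t)
    (H₁ U : ℝ → Matrix (Fin n) (Fin n) ℂ)
    (hH₁c : ContinuousOn H₁ (Set.Icc 0 T))
    (hH₁h : ∀ t ∈ Set.Icc (0:ℝ) T, (H₁ t).IsHermitian)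
    (hclose : ∀ t ∈ Set.Icc (0:ℝ) T, frob (H₁ t - Λ t • H) ≤ ε)
    (hU : ∀ t ∈ Set.Icc (0:ℝ) T, HasDerivAt U ((-Complex.I) • (H₁ t * U t)) t)
    (hU0 : U 0 = 1) :
    ∀ t ∈ Set.Icc (0:ℝ) T,
      (∫ s in (0:ℝ)..t, Λ s) - dF (U t) 1 ≤
        dF (U t) (NormedSpace.exp (((∫ s in (0:ℝ)..t, Λ s : ℝ) : ℂ) • ((-Complex.I) • H)))
          + ((∫ s in (0:ℝ)..t, Λ s)
            - dF (NormedSpace.exp (((∫ s in (0:ℝ)..t, Λ s : ℝ) : ℂ) • ((-Complex.I) • H))) 1) ∧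
      dF (U t) (NormedSpace.exp (((∫ s in (0:ℝ)..t, Λ s : ℝ) : ℂ) • ((-Complex.I) • H)))
          + ((∫ s in (0:ℝ)..t, Λ s)
            - dF (NormedSpace.exp (((∫ s in (0:ℝ)..t, Λ s : ℝ) : ℂ) • ((-Complex.I) • H))) 1)
        ≤ ε * t + ((∫ s in (0:ℝ)..t, Λ s)
            - dF (NormedSpace.exp (((∫ s in (0:ℝ)..t, Λ s : ℝ) : ℂ) • ((-Complex.I) • H))) 1) :=
  tightness_core_general T ε H hH Λ hΛc H₁ U hH₁c hH₁h hclose hU hU0
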